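/- arXiv:0802.3585 — 5 statements merged into one kernel-verified Lean document; each statement's English description precedes it below -/
import Mathlib

section
/- Let p = 1. Every compatible price π is continuous on all of E with respect to the strong norm; in particular there exists a constant K ≥ 0 such that |π(z)| ≤ K · E‖z‖_TV for every z ∈ E. -/
/-!
If no `K` with `π x ≤ K E[x_T]` on `E₊` existed, plans `xₙ` with `π xₙ > (n + 1)² E[xₙ_T]`,
rescaled to price `n + 1`, would tend to `0` in the intertemporal norm (which is at most
`(T + 1) E[x_T]` on plans), against compatibility at `0`. A commodity `z = x - y` is split
pathwise by its Jordan decomposition `z = (V + z)/2 - (V - z)/2`, where `V_t` is the variation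
of `z` up to time `t`. Both parts are plans and add up to `V_T = ‖z‖_TV` at time `T`, so
`|π z| ≤ π p + π q ≤ K E[V_T] = K ‖z‖_s`. The parts are adapted because the variation of a
right-continuous path over `[a, t]` equals its variation over the rational times in `[a, t]`
together with `t`, so it depends on only countably many coordinates.
-/

open MeasureTheory Set Filter
open scoped ENNReal Topology Classical

noncomputable section

namespace Equil

variable {Ω : Type*} [m : MeasurableSpace Ω]

/-- The Stieltjes measure associated to a path (`0` if the path is not a
nondecreasing right-continuous function). -/
def pathMeasure (f : ℝ → ℝ) : Measure ℝ :=
  if h : Monotone f ∧ ∀ x, ContinuousWithinAt f (Set.Ici x) x then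
    StieltjesFunction.measure ⟨f, h.1, h.2⟩
  else 0

/-- A consumption plan in `E₊`: pathwise it is the cumulative consumption,
zero before time `0`, nondecreasing, right-continuous, constant after `T`;
the process is adapted and `x_T ∈ L^p(P)`. -/
structure IsPlan (P : Measure Ω) (ℱ : Filtration ℝ m) (T : ℝ) (p : ℝ≥0∞)
    (x : Ω → ℝ → ℝ) : Prop where
  mono : ∀ ω, Monotone (x ω)
  right_cont : ∀ ω t, ContinuousWithinAt (x ω) (Set.Ici t) t
  zero_neg : ∀ ω, ∀ t < 0, x ω t = 0
  const_ge : ∀ ω, ∀ t, T ≤ t → x ω t = x ω T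
  adapted : ∀ t, Measurable[ℱ t] fun ω => x ω t
  memLp : MemLp (fun ω => x ω T) p P

/-- Membership in the commodity space `E`, the linear span of `E₊`. -/
def MemE (P : Measure Ω) (ℱ : Filtration ℝ m) (T : ℝ) (p : ℝ≥0∞)
    (z : Ω → ℝ → ℝ) : Prop :=
  ∃ x y, IsPlan P ℱ T p x ∧ IsPlan P ℱ T p y ∧ z = x - y

/-- The intertemporal norm `‖z‖ = (E ∫_{[0,T]} |z_t|^p dκ)^{1/p}` with
`κ = Lebesgue + δ_T`. -/
def inorm (P : Measure Ω) (T : ℝ) (p : ℝ≥0∞) (z : Ω → ℝ → ℝ) : ℝ :=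
  (∫ ω, ((∫ t in Set.Icc (0 : ℝ) T, |z ω t| ^ p.toReal) + |z ω T| ^ p.toReal) ∂P) ^
    (1 / p.toReal)

/-- The pathwise total variation of the measure `dz` on `[0,T]`. -/
def pathTV (T : ℝ) (f : ℝ → ℝ) : ℝ :=
  |f 0| + (eVariationOn f (Set.Icc 0 T)).toReal

/-- The strong norm `‖z‖_s = E ‖z‖_TV`. -/
def strongNorm (P : Measure Ω) (T : ℝ) (z : Ω → ℝ → ℝ) : ℝ :=
  ∫ ω, pathTV T (z ω) ∂P

/-- The pairing `E ∫_{[0,T]} ψ dx` of a process `ψ` with a plan `x`. -/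
def pairPlan (P : Measure Ω) (T : ℝ) (ψ : Ω → ℝ → ℝ) (x : Ω → ℝ → ℝ) : ℝ :=
  ∫ ω, ∫ t in Set.Icc (0 : ℝ) T, ψ ω t ∂(pathMeasure (x ω)) ∂P

/-- A price (a linear functional, nonnegative on `E₊`) is compatible if its
restriction to the consumption set `E₊` is continuous for the intertemporal
norm. -/
def Compatible (P : Measure Ω) (ℱ : Filtration ℝ m) (T : ℝ) (p : ℝ≥0∞)
    (π : (Ω → ℝ → ℝ) →ₗ[ℝ] ℝ) : Prop :=
  ∀ x, IsPlan P ℱ T p x →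
    ∀ xn : ℕ → Ω → ℝ → ℝ, (∀ n, IsPlan P ℱ T p (xn n)) →
      Tendsto (fun n => inorm P T p (xn n - x)) atTop (nhds 0) →
      Tendsto (fun n => π (xn n)) atTop (nhds (π x))

/-- The cumulative path of `δ_τ h`, the random measure delivering `h` units at
time `τ`. -/
def deltaPlan (τ h : Ω → ℝ) : Ω → ℝ → ℝ := fun ω t => if τ ω ≤ t then h ω else 0

/-- A `[0,T]`-valued stopping time. -/
def IsBddStoppingTime (ℱ : Filtration ℝ m) (T : ℝ) (τ : Ω → ℝ) : Prop :=
  IsStoppingTime ℱ (fun ω => (τ ω : WithTop ℝ)) ∧ ∀ ω, τ ω ∈ Set.Icc 0 T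

/-- Right-continuous on `[0,T)` with left limits on `(0,T]`. -/
def CadlagOn (T : ℝ) (f : ℝ → ℝ) : Prop :=
  (∀ t ∈ Set.Ico (0 : ℝ) T, ContinuousWithinAt f (Set.Ici t) t) ∧
  ∀ t ∈ Set.Ioc (0 : ℝ) T, ∃ l, Tendsto f (nhdsWithin t (Set.Ico 0 t)) (nhds l)

/-- `sup_{t ∈ [0,T]} f t`. -/
def supOn (T : ℝ) (f : ℝ → ℝ) : ℝ := ⨆ t : Set.Icc (0 : ℝ) T, f t

/-- `ψ` is the optional projection of `ξ`: `ψ_τ = E[ξ_τ | 𝓕_τ]` a.s.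
for every stopping time `τ ≤ T`. -/
def IsOptionalProjection (P : Measure Ω) (ℱ : Filtration ℝ m) (T : ℝ)
    (ψ ξ : Ω → ℝ → ℝ) : Prop :=
  ∀ (τ : Ω → ℝ) (hτ : IsStoppingTime ℱ (fun ω => (τ ω : WithTop ℝ))), (∀ ω, τ ω ∈ Set.Icc 0 T) →
    (fun ω => ψ ω (τ ω)) =ᵐ[P] P[fun ω => ξ ω (τ ω)|hτ.measurableSpace]

/-- The optional sigma-field on `Ω × [0,T]`: generated by the adapted processes
with right-continuous sample paths admitting left limits. -/
def optionalSigma (ℱ : Filtration ℝ m) (T : ℝ) : MeasurableSpace (Ω × ℝ) :=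
  ⨆ f ∈ {f : Ω → ℝ → ℝ |
      (∀ t, Measurable[ℱ t] fun ω => f ω t) ∧ ∀ ω, CadlagOn T (f ω)},
    MeasurableSpace.comap (fun q : Ω × ℝ => f q.1 q.2) (borel ℝ)

/-- A set `A` is radial at `x ∈ A`. -/
def RadialAt (A : Set (Ω → ℝ → ℝ)) (x : Ω → ℝ → ℝ) : Prop :=
  ∀ y, ∃ a, a ∈ Set.Ioc (0 : ℝ) 1 ∧
    ∀ α ∈ Set.Icc (0 : ℝ) a, (1 - α) • x + α • y ∈ A

end Equil

theorem eVariationOn_sub_le {α E : Type*} [LinearOrder α] [SeminormedAddCommGroup E]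
    (f g : α → E) (s : Set α) :
    eVariationOn (f - g) s ≤ eVariationOn f s + eVariationOn g s := by
  refine iSup_le fun ⟨n, u, hu, us⟩ => ?_
  calc ∑ i ∈ Finset.range n, edist ((f - g) (u (i + 1))) ((f - g) (u i))
      ≤ ∑ i ∈ Finset.range n,
          (edist (f (u (i + 1))) (f (u i)) + edist (g (u (i + 1))) (g (u i))) := by
        gcongr with i
        simp only [Pi.sub_apply, sub_eq_add_neg]
        exact (edist_add_add_le _ _ _ _).trans_eq (by rw [edist_neg_neg])
    _ ≤ eVariationOn f s + eVariationOn g s := by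
        rw [Finset.sum_add_distrib]
        exact add_le_add (eVariationOn.sum_le hu us) (eVariationOn.sum_le hu us)

theorem BoundedVariationOn.sub {α E : Type*} [LinearOrder α] [SeminormedAddCommGroup E]
    {f g : α → E} {s : Set α} (hf : BoundedVariationOn f s) (hg : BoundedVariationOn g s) :
    BoundedVariationOn (f - g) s :=
  ne_top_of_le_ne_top (ENNReal.add_ne_top.2 ⟨hf, hg⟩) (eVariationOn_sub_le f g s)

theorem eVariationOn_neg {α E : Type*} [LinearOrder α] [SeminormedAddCommGroup E]
    (f : α → E) (s : Set α) : eVariationOn (-f) s = eVariationOn f s := by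
  simp only [eVariationOn, Pi.neg_apply, edist_neg_neg]

theorem eVariationOn_le_of_tendsto_comp {α E : Type*} [LinearOrder α] [PseudoEMetricSpace E]
    {f : α → E} {s D : Set α} {φ : ℕ → α → α} (hφ : ∀ k, MonotoneOn (φ k) s)
    (hφD : ∀ k, MapsTo (φ k) s D)
    (hlim : ∀ x ∈ s, Tendsto (fun k => f (φ k x)) atTop (𝓝 (f x))) :
    eVariationOn f s ≤ eVariationOn f D := by
  refine iSup_le fun ⟨n, u, hu, us⟩ => ?_
  refine le_of_tendsto' (tendsto_finsetSum _ fun i _ =>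
    (hlim _ (us (i + 1))).edist (hlim _ (us i))) fun k => ?_
  exact eVariationOn.sum_le (fun i j hij => hφ k (us i) (us j) (hu hij)) fun i => hφD k (us i)

theorem eVariationOn_Icc_eq_inter_rat {E : Type*} [PseudoEMetricSpace E] {f : ℝ → E} {a b : ℝ}
    (hf : ∀ x ∈ Icc a b, ContinuousWithinAt f (Ici x) x) :
    eVariationOn f (Icc a b) =
      eVariationOn f (Icc a b ∩ insert b (range ((↑) : ℚ → ℝ))) := by
  refine le_antisymm ?_ (eVariationOn.mono f inter_subset_left)
  set φ : ℕ → ℝ → ℝ := fun k x => min (⌈x * (k + 1)⌉ / (k + 1)) b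
  have hk (k : ℕ) : (0 : ℝ) < k + 1 := by positivity
  have le_φ (k : ℕ) {x : ℝ} (hx : x ≤ b) : x ≤ φ k x :=
    le_min ((le_div_iff₀ (hk k)).2 (Int.le_ceil _)) hx
  have φ_le (k : ℕ) (x : ℝ) : φ k x ≤ x + 1 / (k + 1) := by
    refine (min_le_left _ _).trans ?_
    rw [div_le_iff₀ (hk k), add_mul, one_div_mul_cancel (hk k).ne']
    exact (Int.ceil_lt_add_one _).le
  refine eVariationOn_le_of_tendsto_comp (φ := φ) (fun k x _ y _ hxy => ?_) (fun k x hx => ?_)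
    fun x hx => ?_
  · exact min_le_min_right _ <| div_le_div_of_nonneg_right
      (Int.cast_le.2 <| Int.ceil_mono <| mul_le_mul_of_nonneg_right hxy (hk k).le) (hk k).le
  · refine ⟨⟨hx.1.trans (le_φ k hx.2), min_le_right _ _⟩, ?_⟩
    rcases min_choice (⌈x * (k + 1)⌉ / (k + 1) : ℝ) b with h | h
    · exact .inr ⟨⌈x * (k + 1)⌉ / (k + 1), by simp [φ, h]⟩
    · exact .inl h
  · refine (hf x hx).tendsto.comp
      (tendsto_nhdsWithin_iff.2 ⟨?_, .of_forall fun k => le_φ k hx.2⟩)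
    refine tendsto_of_tendsto_of_tendsto_of_le_of_le tendsto_const_nhds ?_ (fun k => le_φ k hx.2)
      (φ_le · x)
    simpa using tendsto_one_div_add_atTop_nhds_zero_nat.const_add x

theorem measurable_eVariationOn_of_countable {β E : Type*} {mβ : MeasurableSpace β}
    [PseudoEMetricSpace E] [MeasurableSpace E] [OpensMeasurableSpace E] [SecondCountableTopology E]
    {g : β → ℝ → E} {D : Set ℝ} (hD : D.Countable)
    (hg : ∀ t ∈ D, Measurable fun ω => g ω t) :
    Measurable fun ω => eVariationOn (g ω) D := by
  have := hD.to_subtype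
  -- the variation on `D` is a lower semicontinuous function of the restriction to `D`
  have hlsc : LowerSemicontinuous fun h : D → E => eVariationOn h univ := fun h _ =>
    eVariationOn.lowerSemicontinuous_aux (F := id) fun d _ => (continuous_apply d).tendsto h
  convert hlsc.measurable.comp (measurable_pi_lambda (fun ω (d : D) => g ω d) fun d => hg d d.2)
    with ω
  have h := eVariationOn.comp_eq_of_monotoneOn (g ω) ((↑) : D → ℝ)
    ((Subtype.mono_coe _).monotoneOn univ)
  rwa [image_univ, Subtype.range_coe, eq_comm] at h

theorem measurable_eVariationOn_Icc {β E : Type*} {mβ : MeasurableSpace β}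
    [PseudoEMetricSpace E] [MeasurableSpace E] [OpensMeasurableSpace E] [SecondCountableTopology E]
    {g : β → ℝ → E} {a b : ℝ}
    (hrc : ∀ ω, ∀ x ∈ Icc a b, ContinuousWithinAt (g ω) (Ici x) x)
    (hg : ∀ t ∈ Icc a b, Measurable fun ω => g ω t) :
    Measurable fun ω => eVariationOn (g ω) (Icc a b) := by
  simp_rw [eVariationOn_Icc_eq_inter_rat (hrc _)]
  exact measurable_eVariationOn_of_countable (((countable_range _).insert b).mono
    inter_subset_right) fun t ht => hg t ht.1

namespace Equil

variable {Ω : Type*} [m : MeasurableSpace Ω]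

-- The base point `-1` is arbitrary: the paths of interest vanish before time `0`.
def cumVariation (f : ℝ → ℝ) : ℝ → ℝ := variationOnFromTo f univ (-1)

def jordanPos (f : ℝ → ℝ) (t : ℝ) : ℝ := (cumVariation f t + f t) / 2

section Path

variable {f : ℝ → ℝ}

theorem cumVariation_eq_toReal {t : ℝ} (ht : -1 ≤ t) :
    cumVariation f t = (eVariationOn f (Icc (-1) t)).toReal := by
  rw [cumVariation, variationOnFromTo.eq_of_le _ _ ht, univ_inter]

theorem cumVariation_of_neg (hf0 : ∀ t < 0, f t = 0) {t : ℝ} (ht : t < 0) :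
    cumVariation f t = 0 := by
  have hzero : ∀ {a b : ℝ}, b < 0 → eVariationOn f (Icc a b) = 0 := fun hb =>
    eVariationOn.constant_on <| subsingleton_singleton.anti <| by
      rintro _ ⟨s, hs, rfl⟩
      exact hf0 s (hs.2.trans_lt hb)
  rw [cumVariation, variationOnFromTo]
  split_ifs <;> simp only [univ_inter, hzero ht, hzero (by norm_num : (-1 : ℝ) < 0),
    ENNReal.toReal_zero, neg_zero]

theorem cumVariation_neg : cumVariation (-f) = cumVariation f := by
  ext t
  simp only [cumVariation, variationOnFromTo, eVariationOn_neg]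

theorem abs_le_cumVariation (hf : LocallyBoundedVariationOn f univ) (hf0 : ∀ t < 0, f t = 0)
    {t : ℝ} (ht : -1 ≤ t) : |f t| ≤ cumVariation f t := by
  have h := variationOnFromTo.abs_sub_le_sub_of_le hf (mem_univ (-1)) (mem_univ (-1))
    (mem_univ t) ht
  rwa [hf0 (-1) (by norm_num), sub_zero, variationOnFromTo.self, sub_zero] at h

theorem cumVariation_eq_pathTV (hf : LocallyBoundedVariationOn f univ) (hf0 : ∀ t < 0, f t = 0)
    {T : ℝ} (hT : 0 ≤ T) : cumVariation f T = pathTV T f := by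
  have hjump : eVariationOn f (Icc (-1) 0) = edist (f 0) 0 := by
    have h := eVariationOn.eVariationOn_on_inter_Iic_eq_Iio_add_edist (f := f) (s := Icc (-1) 0)
      (a := 0) (l := 0) ?_ ⟨by norm_num, le_rfl⟩ ?_
    · rw [inter_eq_left.2 Icc_subset_Iic_self] at h
      rw [h, eVariationOn.constant_on, zero_add]
      refine subsingleton_singleton (a := 0) |>.anti ?_
      rintro _ ⟨s, hs, rfl⟩
      exact hf0 s hs.2
    · exact (right_nhdsWithin_Ico_neBot (by norm_num)).mono
        (nhdsWithin_mono _ fun s hs => ⟨Ico_subset_Icc_self hs, hs.2⟩)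
    · exact tendsto_const_nhds.congr' <|
        eventually_mem_nhdsWithin.mono fun s hs => (hf0 s hs.2).symm
  rw [cumVariation, ← variationOnFromTo.add hf (mem_univ _) (mem_univ 0) (mem_univ _),
    variationOnFromTo.eq_of_le _ _ (by norm_num), variationOnFromTo.eq_of_le _ _ hT, univ_inter,
    univ_inter, hjump, pathTV, edist_dist, dist_zero_right, ENNReal.toReal_ofReal (norm_nonneg _),
    Real.norm_eq_abs]

theorem cumVariation_eq_of_le (hf : LocallyBoundedVariationOn f univ) {T : ℝ}
    (hconst : ∀ t, T ≤ t → f t = f T) {t : ℝ} (ht : T ≤ t) :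
    cumVariation f t = cumVariation f T := by
  rw [cumVariation, ← variationOnFromTo.add hf (mem_univ _) (mem_univ T) (mem_univ _),
    variationOnFromTo.eq_of_le _ _ ht, eVariationOn.constant_on, ENNReal.toReal_zero, add_zero]
  refine subsingleton_singleton (a := f T) |>.anti ?_
  rintro _ ⟨s, hs, rfl⟩
  exact hconst s hs.2.1

theorem monotone_jordanPos (hf : LocallyBoundedVariationOn f univ) : Monotone (jordanPos f) :=
  fun _ _ hst => div_le_div_of_nonneg_right
    (monotoneOn_univ.1 (variationOnFromTo.add_self_monotoneOn hf (mem_univ (-1))) hst) zero_le_two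

theorem continuousWithinAt_jordanPos (hf : BoundedVariationOn f univ) {t : ℝ}
    (ht : ContinuousWithinAt f (Ici t) t) : ContinuousWithinAt (jordanPos f) (Ici t) t :=
  ((hf.continuousWithinAt_variationOnFromTo_Ici ht).add ht).div_const 2

theorem jordanPos_sub_jordanPos_neg : jordanPos f - jordanPos (-f) = f := by
  ext t
  simp only [Pi.sub_apply, jordanPos, cumVariation_neg, Pi.neg_apply]
  ring

theorem jordanPos_add_jordanPos_neg (t : ℝ) :
    jordanPos f t + jordanPos (-f) t = cumVariation f t := by
  simp only [jordanPos, cumVariation_neg, Pi.neg_apply]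
  ring

theorem jordanPos_of_neg (hf0 : ∀ t < 0, f t = 0) {t : ℝ} (ht : t < 0) : jordanPos f t = 0 := by
  rw [jordanPos, cumVariation_of_neg hf0 ht, hf0 t ht, add_zero, zero_div]

theorem jordanPos_nonneg (hf : LocallyBoundedVariationOn f univ) (hf0 : ∀ t < 0, f t = 0)
    (t : ℝ) : 0 ≤ jordanPos f t :=
  (jordanPos_of_neg hf0 (min_lt_of_right_lt (by norm_num : (-1 : ℝ) < 0))).symm.le.trans
    (monotone_jordanPos hf (min_le_left t (-1)))

theorem jordanPos_le_cumVariation (hf : LocallyBoundedVariationOn f univ)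
    (hf0 : ∀ t < 0, f t = 0) (t : ℝ) : jordanPos f t ≤ cumVariation f t := by
  rcases lt_or_ge t 0 with ht | ht
  · rw [jordanPos_of_neg hf0 ht, cumVariation_of_neg hf0 ht]
  · have := (le_abs_self (f t)).trans (abs_le_cumVariation hf hf0 (by linarith : (-1 : ℝ) ≤ t))
    rw [jordanPos]
    linarith

theorem cumVariation_sub_le {g h : ℝ → ℝ} (hg : Monotone g) (hh : Monotone h)
    (hg0 : ∀ t < 0, g t = 0) (hh0 : ∀ t < 0, h t = 0) (t : ℝ) :
    cumVariation (g - h) t ≤ g t + h t := by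
  rcases lt_or_ge t 0 with ht | ht
  · rw [cumVariation_of_neg (fun s hs => by simp [hg0 s hs, hh0 s hs]) ht, hg0 t ht, hh0 t ht,
      add_zero]
  have hvar {k : ℝ → ℝ} (hk : Monotone k) (hk0 : ∀ t < 0, k t = 0) :
      eVariationOn k (Icc (-1) t) = .ofReal (k t) := by
    simpa [hk0 (-1) (by norm_num)] using
      (hk.monotoneOn univ).eVariationOn_eq (mem_univ (-1)) (mem_univ t)
  have hnonneg {k : ℝ → ℝ} (hk : Monotone k) (hk0 : ∀ t < 0, k t = 0) : 0 ≤ k t :=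
    hk0 (-1) (by norm_num) ▸ hk (by linarith)
  rw [cumVariation_eq_toReal (by linarith)]
  refine ENNReal.toReal_le_of_le_ofReal (add_nonneg (hnonneg hg hg0) (hnonneg hh hh0))
    ((eVariationOn_sub_le g h _).trans ?_)
  rw [hvar hg hg0, hvar hh hh0, ENNReal.ofReal_add (hnonneg hg hg0) (hnonneg hh hh0)]

end Path

section Plan

variable {P : Measure Ω} {ℱ : Filtration ℝ m} {T : ℝ}
  {p : ℝ≥0∞} {x y : Ω → ℝ → ℝ}

theorem IsPlan.nonneg (hx : IsPlan P ℱ T p x) (ω : Ω) (t : ℝ) : 0 ≤ x ω t :=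
  (hx.zero_neg ω _ (min_lt_of_right_lt (by norm_num : (-1 : ℝ) < 0))).symm.le.trans
    (hx.mono ω (min_le_left t (-1)))

theorem IsPlan.le_apply_T (hx : IsPlan P ℱ T p x) (ω : Ω) (t : ℝ) : x ω t ≤ x ω T := by
  rcases le_total t T with ht | ht
  · exact hx.mono ω ht
  · exact (hx.const_ge ω t ht).le

theorem IsPlan.boundedVariationOn (hx : IsPlan P ℱ T p x) (ω : Ω) :
    BoundedVariationOn (x ω) univ :=
  ((hx.mono ω).monotoneOn univ).boundedVariationOn fun t _ => by
    rw [abs_of_nonneg (hx.nonneg ω t)]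
    exact hx.le_apply_T ω t

theorem IsPlan.measurable_le (hx : IsPlan P ℱ T p x) {s t : ℝ} (hst : s ≤ t) :
    Measurable[ℱ t] fun ω => x ω s :=
  (hx.adapted s).mono (ℱ.mono hst) le_rfl

theorem IsPlan.smul (hx : IsPlan P ℱ T p x) {c : ℝ} (hc : 0 ≤ c) :
    IsPlan P ℱ T p (c • x) where
  mono ω _ _ hst := mul_le_mul_of_nonneg_left (hx.mono ω hst) hc
  right_cont ω t := (hx.right_cont ω t).const_smul c
  zero_neg ω t ht := by simp [hx.zero_neg ω t ht]
  const_ge ω t ht := by simp [hx.const_ge ω t ht]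
  adapted t := (hx.adapted t).const_mul c
  memLp := hx.memLp.const_mul c

theorem isPlan_zero : IsPlan P ℱ T p 0 where
  mono _ := monotone_const
  right_cont _ _ := continuousWithinAt_const
  zero_neg _ _ _ := rfl
  const_ge _ _ _ := rfl
  adapted _ := measurable_const
  memLp := MemLp.zero

theorem IsPlan.integrable (hx : IsPlan P ℱ T 1 x) : Integrable (fun ω => x ω T) P :=
  memLp_one_iff_integrable.1 hx.memLp

theorem IsPlan.boundedVariationOn_sub (hx : IsPlan P ℱ T p x) (hy : IsPlan P ℱ T p y)
    (ω : Ω) : BoundedVariationOn ((x - y) ω) univ :=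
  (hx.boundedVariationOn ω).sub (hy.boundedVariationOn ω)

theorem IsPlan.sub_apply_of_neg (hx : IsPlan P ℱ T p x) (hy : IsPlan P ℱ T p y) (ω : Ω) :
    ∀ t < 0, (x - y) ω t = 0 := fun t ht => by
  simp [hx.zero_neg ω t ht, hy.zero_neg ω t ht]

theorem IsPlan.continuousWithinAt_sub (hx : IsPlan P ℱ T p x) (hy : IsPlan P ℱ T p y)
    (ω : Ω) (t : ℝ) : ContinuousWithinAt ((x - y) ω) (Ici t) t :=
  (hx.right_cont ω t).sub (hy.right_cont ω t)

theorem measurable_jordanPos_sub (hx : IsPlan P ℱ T p x) (hy : IsPlan P ℱ T p y) (t : ℝ) :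
    Measurable[ℱ t] fun ω => jordanPos ((x - y) ω) t := by
  rcases lt_or_ge t 0 with ht | ht
  · simp only [jordanPos_of_neg (hx.sub_apply_of_neg hy _) ht, measurable_const]
  have hmeas : ∀ s ≤ t, Measurable[ℱ t] fun ω => (x - y) ω s := fun s hs =>
    (hx.measurable_le hs).sub (hy.measurable_le hs)
  simp only [jordanPos, cumVariation_eq_toReal (by linarith : (-1 : ℝ) ≤ t)]
  exact ((measurable_eVariationOn_Icc (fun ω s _ => hx.continuousWithinAt_sub hy ω s)
    fun s hs => hmeas s hs.2).ennreal_toReal.add (hmeas t le_rfl)).div_const 2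

theorem isPlan_jordanPos_sub (hx : IsPlan P ℱ T p x) (hy : IsPlan P ℱ T p y) :
    IsPlan P ℱ T p fun ω => jordanPos ((x - y) ω) := by
  have hbv := hx.boundedVariationOn_sub hy
  have h0 := hx.sub_apply_of_neg hy
  have hconst ω : ∀ t, T ≤ t → (x - y) ω t = (x - y) ω T := fun t ht => by
    simp [hx.const_ge ω t ht, hy.const_ge ω t ht]
  have hadapted := measurable_jordanPos_sub hx hy
  refine ⟨fun ω => monotone_jordanPos (hbv ω).locallyBoundedVariationOn,
    fun ω t => continuousWithinAt_jordanPos (hbv ω) (hx.continuousWithinAt_sub hy ω t),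
    fun ω t => jordanPos_of_neg (h0 ω), fun ω t ht => ?_, hadapted, ?_⟩
  · rw [jordanPos, jordanPos, cumVariation_eq_of_le (hbv ω).locallyBoundedVariationOn
      (hconst ω) ht, hconst ω t ht]
  · refine (hx.memLp.add hy.memLp).of_le ((hadapted T).mono (ℱ.le T) le_rfl).aestronglyMeasurable
      (.of_forall fun ω => ?_)
    rw [Real.norm_eq_abs, Real.norm_eq_abs, abs_of_nonneg (jordanPos_nonneg
      (hbv ω).locallyBoundedVariationOn (h0 ω) T)]
    exact ((jordanPos_le_cumVariation (hbv ω).locallyBoundedVariationOn (h0 ω) T).trans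
      (cumVariation_sub_le (hx.mono ω) (hy.mono ω) (hx.zero_neg ω) (hy.zero_neg ω) T)).trans
      (le_abs_self _)

theorem strongNorm_sub_eq (hT : 0 ≤ T) (hx : IsPlan P ℱ T 1 x) (hy : IsPlan P ℱ T 1 y) :
    strongNorm P T (x - y) =
      (∫ ω, jordanPos ((x - y) ω) T ∂P) + ∫ ω, jordanPos ((y - x) ω) T ∂P := by
  rw [strongNorm, ← integral_add (isPlan_jordanPos_sub hx hy).integrable
    (isPlan_jordanPos_sub hy hx).integrable]
  refine integral_congr_ae (.of_forall fun ω => ?_)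
  dsimp only
  rw [show (y - x) ω = -(x - y) ω from (neg_sub (x ω) (y ω)).symm, jordanPos_add_jordanPos_neg,
    cumVariation_eq_pathTV (hx.boundedVariationOn_sub hy ω).locallyBoundedVariationOn
      (hx.sub_apply_of_neg hy ω) hT]

theorem inorm_nonneg (z : Ω → ℝ → ℝ) : 0 ≤ inorm P T p z :=
  Real.rpow_nonneg (integral_nonneg fun _ => add_nonneg
    (setIntegral_nonneg measurableSet_Icc fun _ _ => Real.rpow_nonneg (abs_nonneg _) _)
    (Real.rpow_nonneg (abs_nonneg _) _)) _

theorem inorm_le_of_isPlan (hT : 0 ≤ T) (hx : IsPlan P ℱ T 1 x) :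
    inorm P T 1 x ≤ (T + 1) * ∫ ω, x ω T ∂P := by
  simp only [inorm, ENNReal.toReal_one, Real.rpow_one, div_one]
  rw [← integral_const_mul]
  refine integral_mono_of_nonneg (.of_forall fun ω => add_nonneg
      (setIntegral_nonneg measurableSet_Icc fun t _ => abs_nonneg _) (abs_nonneg _))
    (hx.integrable.const_mul _) (.of_forall fun ω => ?_)
  have hpath : ∫ t in Icc 0 T, |x ω t| ≤ T * x ω T := by
    have h := norm_setIntegral_le_of_norm_le_const (μ := volume) (f := fun t => |x ω t|)
      (s := Icc 0 T) (C := x ω T) measure_Icc_lt_top fun t _ => by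
        rw [Real.norm_eq_abs, abs_abs, abs_of_nonneg (hx.nonneg ω t)]
        exact hx.le_apply_T ω t
    rw [Real.volume_real_Icc_of_le hT, sub_zero, Real.norm_eq_abs] at h
    linarith [le_abs_self (∫ t in Icc 0 T, |x ω t|)]
  dsimp only
  rw [abs_of_nonneg (hx.nonneg ω T)]
  linarith

theorem exists_le_mul_integral_of_compatible (hT : 0 ≤ T)
    {π : (Ω → ℝ → ℝ) →ₗ[ℝ] ℝ} (hcomp : Compatible P ℱ T 1 π) :
    ∃ K, 0 ≤ K ∧ ∀ x, IsPlan P ℱ T 1 x → π x ≤ K * ∫ ω, x ω T ∂P := by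
  by_contra! h
  choose x hx hlt using fun n : ℕ => h (((n : ℝ) + 1) ^ 2) (by positivity)
  have hπ n : 0 < π (x n) := (mul_nonneg (by positivity)
    (integral_nonneg fun ω => (hx n).nonneg ω T)).trans_lt (hlt n)
  set y := fun n : ℕ => (((n : ℝ) + 1) / π (x n)) • x n
  have hy n : IsPlan P ℱ T 1 (y n) := (hx n).smul (div_pos (by positivity) (hπ n)).le
  have hπy n : π (y n) = n + 1 := by
    simp only [y, map_smul, smul_eq_mul, div_mul_cancel₀ _ (hπ n).ne']
  have hsmall n : inorm P T 1 (y n - 0) ≤ (T + 1) * (1 / ((n : ℝ) + 1)) := by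
    have hint : ∫ ω, y n ω T ∂P = ((n : ℝ) + 1) / π (x n) * ∫ ω, x n ω T ∂P :=
      integral_const_mul _ _
    have hxn : ((n : ℝ) + 1) / π (x n) * ∫ ω, x n ω T ∂P ≤ 1 / ((n : ℝ) + 1) := by
      rw [div_mul_eq_mul_div, div_le_div_iff₀ (hπ n) (by positivity)]
      nlinarith [hlt n]
    rw [sub_zero]
    exact (inorm_le_of_isPlan hT (hy n)).trans
      (hint ▸ mul_le_mul_of_nonneg_left hxn (by linarith))
  have hlim := hcomp 0 isPlan_zero y hy <| squeeze_zero (fun n => inorm_nonneg _) hsmall <| by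
    simpa using tendsto_one_div_add_atTop_nhds_zero_nat.const_mul (T + 1)
  simp only [hπy, map_zero] at hlim
  exact not_tendsto_atTop_of_tendsto_nhds hlim
    (tendsto_atTop_add_const_right _ 1 tendsto_natCast_atTop_atTop)

end Plan

theorem compatible_price_strong_continuous_general
    {Ω : Type*} [m : MeasurableSpace Ω] (P : Measure Ω)
    (ℱ : Filtration ℝ m) (T : ℝ) (hT : 0 < T)
    (π : (Ω → ℝ → ℝ) →ₗ[ℝ] ℝ)
    (hπ : ∀ x, IsPlan P ℱ T 1 x → 0 ≤ π x)
    (hcomp : Compatible P ℱ T 1 π) :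
    ∃ K : ℝ, 0 ≤ K ∧ ∀ z, MemE P ℱ T 1 z → |π z| ≤ K * strongNorm P T z := by
  obtain ⟨K, hK0, hK⟩ := exists_le_mul_integral_of_compatible hT.le hcomp
  refine ⟨K, hK0, ?_⟩
  rintro z ⟨x, y, hx, hy, rfl⟩
  set p := fun ω => jordanPos ((x - y) ω)
  set q := fun ω => jordanPos ((y - x) ω)
  have hp : IsPlan P ℱ T 1 p := isPlan_jordanPos_sub hx hy
  have hq : IsPlan P ℱ T 1 q := isPlan_jordanPos_sub hy hx
  have hpq : x - y = p - q := by
    ext1 ω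
    show (x - y) ω = jordanPos ((x - y) ω) - jordanPos ((y - x) ω)
    rw [show (y - x) ω = -(x - y) ω from (neg_sub (x ω) (y ω)).symm,
      jordanPos_sub_jordanPos_neg]
  calc |π (x - y)| = |π p - π q| := by rw [hpq, map_sub]
    _ ≤ π p + π q := abs_sub_le_of_nonneg_of_le (hπ p hp) (le_add_of_nonneg_right (hπ q hq))
      (hπ q hq) (le_add_of_nonneg_left (hπ p hp))
    _ ≤ K * ∫ ω, p ω T ∂P + K * ∫ ω, q ω T ∂P := add_le_add (hK p hp) (hK q hq)
    _ = K * strongNorm P T (x - y) := by rw [strongNorm_sub_eq hT.le hx hy, mul_add]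

/-- for `p = 1`, every compatible price is continuous on all of `E` for the
strong norm: there is `K ≥ 0` with `|π z| ≤ K ⬝ E‖z‖_TV` for every `z ∈ E`. -/
theorem compatible_price_strong_continuous
    {Ω : Type*} [m : MeasurableSpace Ω] (P : Measure Ω) [IsProbabilityMeasure P]
    (ℱ : Filtration ℝ m) (T : ℝ) (hT : 0 < T)
    (π : (Ω → ℝ → ℝ) →ₗ[ℝ] ℝ)
    (hπ : ∀ x, IsPlan P ℱ T 1 x → 0 ≤ π x)
    (hcomp : Compatible P ℱ T 1 π) :
    ∃ K : ℝ, 0 ≤ K ∧ ∀ z, MemE P ℱ T 1 z → |π z| ≤ K * strongNorm P T z :=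
  compatible_price_strong_continuous_general (m := m) P ℱ T hT π hπ hcomp

end Equil
end
end

section
/- Let p = 1 and let π be a nonnegative linear functional on E satisfying |π(z)| ≤ K · ‖z‖_s for all z ∈ E, for some constant K ≥ 0. Then for every stopping time τ ≤ T there exists an 𝓕_τ-measurable random variable z^τ with 0 ≤ z^τ ≤ K almost surely such that π(δ_τ Z) = E[Z · z^τ] for every Z ∈ L^1(𝓕_τ, P). -/
open MeasureTheory Set Filter
open scoped ENNReal Topology Classical

noncomputable section

/-! On `𝓕_τ`-measurable integrable `Z`, the functional `Z ↦ π(δ_τ Z)` is linear, nonnegative and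
bounded by `K · E|Z|`, because the total variation of the one-jump path of `δ_τ Z` is `|Z|`.
On indicators it is thus a finitely additive set function dominated by `K · P`, hence countably
additive: a measure `ν ≤ K · P` on `𝓕_τ`. Its Radon–Nikodym derivative `z^τ` lies in `[0, K]`,
and the representation `π(δ_τ Z) = E[Z z^τ]` passes from indicators to simple functions by
linearity and to all of `L¹(𝓕_τ)` because both sides are `K`-Lipschitz for the `L¹` distance. -/

namespace MeasureTheory

section

variable {α : Type*} [MeasurableSpace α] {μ : Measure α}

def IsL1Lipschitz (μ : Measure α) (C : ℝ) (Φ : (α → ℝ) → ℝ) : Prop :=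
  ∀ u v, Measurable u → Measurable v → Integrable u μ → Integrable v μ →
    |Φ u - Φ v| ≤ C * ∫ x, |u x - v x| ∂μ

lemma isL1Lipschitz_of_abs_le_integral {C : ℝ} (ψ : (α → ℝ) →ₗ[ℝ] ℝ)
    (hψ : ∀ f, Measurable f → Integrable f μ → |ψ f| ≤ C * ∫ x, |f x| ∂μ) :
    IsL1Lipschitz μ C ψ := fun u v hu hv hui hvi => by
  simpa only [map_sub, Pi.sub_apply] using hψ (u - v) (hu.sub hv) (hui.sub hvi)

lemma isL1Lipschitz_integral_mul {C : ℝ} {g : α → ℝ} (hg : AEStronglyMeasurable g μ)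
    (hgC : ∀ᵐ x ∂μ, |g x| ≤ C) :
    IsL1Lipschitz μ C fun f => ∫ x, f x * g x ∂μ := by
  intro u v _ _ hui hvi
  have hint : ∀ w : α → ℝ, Integrable w μ → Integrable (fun x => w x * g x) μ := fun w hw =>
    hw.mul_bdd hg hgC
  dsimp only
  rw [← integral_sub (hint u hui) (hint v hvi), ← integral_const_mul C, ← Real.norm_eq_abs]
  refine norm_integral_le_of_norm_le ((hui.sub hvi).abs.const_mul C) ?_
  filter_upwards [hgC] with x hx
  rw [← sub_mul, Real.norm_eq_abs, abs_mul, mul_comm C]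
  exact mul_le_mul_of_nonneg_left hx (abs_nonneg _)

lemma IsL1Lipschitz.tendsto {C : ℝ} {Φ : (α → ℝ) → ℝ} (hΦ : IsL1Lipschitz μ C Φ)
    {u : ℕ → α → ℝ} {f : α → ℝ} (hu : ∀ n, Measurable (u n)) (hui : ∀ n, Integrable (u n) μ)
    (hf : Measurable f) (hfi : Integrable f μ)
    (hlim : Tendsto (fun n => ∫ x, |u n x - f x| ∂μ) atTop (𝓝 0)) :
    Tendsto (fun n => Φ (u n)) atTop (𝓝 (Φ f)) := by
  rw [tendsto_iff_dist_tendsto_zero]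
  refine squeeze_zero (fun _ => dist_nonneg) (fun n => hΦ _ _ (hu n) hf (hui n) hfi) ?_
  simpa using hlim.const_mul C

lemma IsL1Lipschitz.eq_of_forall_simpleFunc {C : ℝ} {Φ₁ Φ₂ : (α → ℝ) → ℝ}
    (h₁ : IsL1Lipschitz μ C Φ₁) (h₂ : IsL1Lipschitz μ C Φ₂)
    (h : ∀ s : SimpleFunc α ℝ, Integrable s μ → Φ₁ s = Φ₂ s) {f : α → ℝ} (hf : Measurable f)
    (hfi : Integrable f μ) : Φ₁ f = Φ₂ f := by
  set s : ℕ → SimpleFunc α ℝ := SimpleFunc.approxOn f hf (range f ∪ {0}) 0 (by simp)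
  have hsi : ∀ n, Integrable (s n) μ := SimpleFunc.integrable_approxOn_range hf hfi
  have hlim : Tendsto (fun n => ∫ x, |s n x - f x| ∂μ) atTop (𝓝 0) := by
    have := (ENNReal.tendsto_toReal ENNReal.zero_ne_top).comp
      (SimpleFunc.tendsto_approxOn_range_L1_enorm hf hfi (μ := μ))
    refine this.congr fun n => ?_
    exact (integral_norm_eq_lintegral_enorm ((hsi n).sub hfi).1).symm
  refine tendsto_nhds_unique (h₁.tendsto (fun n => (s n).measurable) hsi hf hfi hlim) ?_
  exact (h₂.tendsto (fun n => (s n).measurable) hsi hf hfi hlim).congr fun n => (h _ (hsi n)).symm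

lemma apply_simpleFunc_eq_integral_mul (ψ : (α → ℝ) →ₗ[ℝ] ℝ) {g : α → ℝ}
    (hg : Integrable g μ) (hψ : ∀ s, MeasurableSet s → ψ (s.indicator 1) = ∫ x in s, g x ∂μ)
    (f : SimpleFunc α ℝ) : ψ f = ∫ x, f x * g x ∂μ := by
  induction f using SimpleFunc.induction with
  | @const c s hs =>
    have hind : ⇑(SimpleFunc.piecewise s hs (SimpleFunc.const α c) (SimpleFunc.const α 0)) =
        c • s.indicator 1 := by
      ext x; by_cases hx : x ∈ s <;> simp [hx]
    have hmul : (fun x => (c • s.indicator 1 : α → ℝ) x * g x) = s.indicator fun x => c * g x := by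
      ext x; by_cases hx : x ∈ s <;> simp [hx]
    rw [hind, map_smul, hψ s hs, hmul, integral_indicator hs, integral_const_mul,
      smul_eq_mul]
  | @add f₁ f₂ _ h₁ h₂ =>
    have hint : ∀ f : SimpleFunc α ℝ, Integrable (fun x => f x * g x) μ := fun f =>
      hg.simpleFunc_mul f
    rw [SimpleFunc.coe_add, map_add, h₁, h₂, ← integral_add (hint f₁) (hint f₂)]
    simp only [Pi.add_apply, add_mul]

lemma isSetRing_measurableSet : IsSetRing {s : Set α | MeasurableSet s} :=
  ⟨.empty, fun _ _ => .union, fun _ _ => .diff⟩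

lemma exists_measure_eq_ofReal_apply_indicator [IsFiniteMeasure μ]
    (ψ : (α → ℝ) →ₗ[ℝ] ℝ) {K : ℝ} (hpos : ∀ s, MeasurableSet s → 0 ≤ ψ (s.indicator 1))
    (hle : ∀ s, MeasurableSet s → ψ (s.indicator 1) ≤ K * μ.real s) :
    ∃ ν : Measure α, ν ≤ ENNReal.ofReal K • μ ∧
      ∀ s, MeasurableSet s → ν s = ENNReal.ofReal (ψ (s.indicator 1)) := by
  set φ : Set α → ℝ≥0∞ := fun s => ENNReal.ofReal (ψ (s.indicator 1))
  have hφ_le : ∀ s, MeasurableSet s → φ s ≤ ENNReal.ofReal K * μ s := fun s hs => by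
    refine (ENNReal.ofReal_le_ofReal (hle s hs)).trans_eq ?_
    rw [ENNReal.ofReal_mul' measureReal_nonneg, ofReal_measureReal]
  have hφ_empty : φ ∅ = 0 := by
    simp only [φ, indicator_empty', map_zero, ENNReal.ofReal_zero]
  let φc : AddContent ℝ≥0∞ {s | MeasurableSet s} :=
    isSetRing_measurableSet.addContent_of_union φ hφ_empty fun {s t} hs ht hst => by
      simp only [φ, indicator_union_of_disjoint hst]
      exact (congrArg ENNReal.ofReal (map_add ψ _ _)).trans
        (ENNReal.ofReal_add (hpos s hs) (hpos t ht))
  -- continuity at `∅` comes from domination by the finite measure `K • μ`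
  have hφ_iUnion : ∀ ⦃f : ℕ → Set α⦄ (hf : ∀ i, MeasurableSet (f i)),
      Pairwise (Function.onFun Disjoint f) → φ (⋃ i, f i) = ∑' i, φ (f i) := fun f hf hd => by
    refine addContent_iUnion_eq_sum_of_tendsto_zero isSetRing_measurableSet φc
      (fun s _ => ENNReal.ofReal_ne_top) (fun s hs hanti hempty => ?_) hf (.iUnion hf) hd
    have hμ := tendsto_measure_iInter_atTop (μ := μ) (fun n => (hs n).nullMeasurableSet) hanti
      ⟨0, measure_ne_top μ _⟩
    rw [hempty, measure_empty] at hμ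
    have hK := ENNReal.Tendsto.const_mul hμ (Or.inr ENNReal.ofReal_ne_top) (a := ENNReal.ofReal K)
    rw [mul_zero] at hK
    exact tendsto_of_tendsto_of_tendsto_of_le_of_le tendsto_const_nhds hK (fun _ => zero_le)
      fun n => hφ_le _ (hs n)
  refine ⟨Measure.ofMeasurable (fun s _ => φ s) hφ_empty hφ_iUnion,
    Measure.le_iff.2 fun s hs => ?_, fun s hs => Measure.ofMeasurable_apply s hs⟩
  rw [Measure.ofMeasurable_apply s hs, Measure.smul_apply, smul_eq_mul]
  exact hφ_le s hs

lemma exists_density_of_apply_indicator_le [IsFiniteMeasure μ] (ψ : (α → ℝ) →ₗ[ℝ] ℝ) {K : ℝ}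
    (hK : 0 ≤ K) (hpos : ∀ s, MeasurableSet s → 0 ≤ ψ (s.indicator 1))
    (hle : ∀ s, MeasurableSet s → ψ (s.indicator 1) ≤ K * μ.real s) :
    ∃ g : α → ℝ, Measurable g ∧ (∀ᵐ x ∂μ, 0 ≤ g x ∧ g x ≤ K) ∧
      ∀ s, MeasurableSet s → ψ (s.indicator 1) = ∫ x in s, g x ∂μ := by
  obtain ⟨ν, hνμ, hν⟩ := exists_measure_eq_ofReal_apply_indicator ψ hpos hle
  have hac : ν ≪ μ := Measure.absolutelyContinuous_of_le_smul hνμ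
  have : IsFiniteMeasure ν := ⟨(hνμ univ).trans_lt (by simp [ENNReal.mul_lt_top])⟩
  have hbound : ν.rnDeriv μ ≤ᵐ[μ] fun _ => ENNReal.ofReal K := by
    refine ae_le_of_forall_setLIntegral_le_of_sigmaFinite (Measure.measurable_rnDeriv ν μ)
      fun s hs _ => ?_
    rw [Measure.setLIntegral_rnDeriv hac, setLIntegral_const]
    simpa using hνμ s
  refine ⟨fun x => (ν.rnDeriv μ x).toReal, (Measure.measurable_rnDeriv ν μ).ennreal_toReal, ?_,
    fun s hs => ?_⟩
  · filter_upwards [hbound] with x hx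
    exact ⟨ENNReal.toReal_nonneg, ENNReal.toReal_le_of_le_ofReal hK hx⟩
  · rw [Measure.setIntegral_toReal_rnDeriv hac, measureReal_def, hν s hs,
      ENNReal.toReal_ofReal (hpos s hs)]

theorem exists_density_of_abs_le_integral [IsFiniteMeasure μ]
    (ψ : (α → ℝ) →ₗ[ℝ] ℝ) {K : ℝ} (hK : 0 ≤ K)
    (hψ : ∀ f, Measurable f → Integrable f μ → |ψ f| ≤ K * ∫ x, |f x| ∂μ)
    (hpos : ∀ s, MeasurableSet s → 0 ≤ ψ (s.indicator 1)) :
    ∃ g : α → ℝ, Measurable g ∧ (∀ᵐ x ∂μ, 0 ≤ g x ∧ g x ≤ K) ∧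
      ∀ f, Measurable f → Integrable f μ → ψ f = ∫ x, f x * g x ∂μ := by
  have hle : ∀ s, MeasurableSet s → ψ (s.indicator 1) ≤ K * μ.real s := fun s hs => by
    have h := hψ _ (measurable_one.indicator hs) ((integrable_const 1).indicator hs)
    have habs : (fun x => |s.indicator (1 : α → ℝ) x|) = s.indicator 1 := by
      ext x; by_cases hx : x ∈ s <;> simp [hx]
    rw [habs, integral_indicator_one hs] at h
    exact (le_abs_self _).trans h
  obtain ⟨g, hgm, hgK, hg⟩ := exists_density_of_apply_indicator_le ψ hK hpos hle
  have hgC : ∀ᵐ x ∂μ, |g x| ≤ K := hgK.mono fun x hx => abs_le.2 ⟨by linarith [hx.1], hx.2⟩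
  have hgi : Integrable g μ := (integrable_const K).mono' hgm.aestronglyMeasurable hgC
  refine ⟨g, hgm, hgK, fun f hf hfi => ?_⟩
  exact (isL1Lipschitz_of_abs_le_integral ψ hψ).eq_of_forall_simpleFunc
    (isL1Lipschitz_integral_mul hgm.aestronglyMeasurable hgC)
    (fun s _ => apply_simpleFunc_eq_integral_mul ψ hgi hg s) hf hfi

end

theorem exists_density_of_abs_le_integral_of_le {α : Type*} {m m₀ : MeasurableSpace α}
    (hm : m ≤ m₀) {μ : Measure[m₀] α} [IsFiniteMeasure μ]
    (ψ : (α → ℝ) →ₗ[ℝ] ℝ) {K : ℝ} (hK : 0 ≤ K)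
    (hψ : ∀ f : α → ℝ, Measurable[m] f → Integrable f μ → |ψ f| ≤ K * ∫ x, |f x| ∂μ)
    (hpos : ∀ s, MeasurableSet[m] s → 0 ≤ ψ (s.indicator 1)) :
    ∃ g : α → ℝ, Measurable[m] g ∧ (∀ᵐ x ∂μ, 0 ≤ g x ∧ g x ≤ K) ∧
      ∀ f : α → ℝ, Measurable[m] f → Integrable f μ → ψ f = ∫ x, f x * g x ∂μ := by
  obtain ⟨g, hgm, hgK, hg⟩ := @exists_density_of_abs_le_integral α m (μ.trim hm)
    (isFiniteMeasure_trim hm) ψ K hK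
    (fun f hf hfi => by
      rw [← integral_trim hm (μ := μ) (f := fun x => |f x|)
        (measurable_abs.comp hf).stronglyMeasurable]
      exact hψ f hf (integrable_of_integrable_trim hm hfi)) hpos
  refine ⟨g, hgm, ae_of_ae_trim hm hgK, fun f hf hfi => ?_⟩
  rw [hg f hf (hfi.trim hm hf.stronglyMeasurable),
    integral_trim hm (f := fun x => f x * g x) (hf.mul hgm).stronglyMeasurable]

end MeasureTheory

namespace Equil

variable {Ω : Type*} [m : MeasurableSpace Ω]

section StepPath

variable {a c T : ℝ}

lemma monotone_step (hc : 0 ≤ c) : Monotone fun t : ℝ => if a ≤ t then c else 0 := by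
  intro s t hst
  dsimp only
  split_ifs with hs ht ht
  exacts [le_rfl, absurd (hs.trans hst) ht, hc, le_rfl]

lemma continuousWithinAt_Ici_step (t : ℝ) :
    ContinuousWithinAt (fun t : ℝ => if a ≤ t then c else 0) (Ici t) t := by
  rcases le_or_gt a t with h | h
  · exact continuousWithinAt_const.congr (fun s hs => if_pos (h.trans hs)) (if_pos h)
  · refine continuousWithinAt_const.congr_of_eventuallyEq ?_ (if_neg h.not_ge)
    exact eventually_nhdsWithin_of_eventually_nhds
      ((eventually_lt_nhds h).mono fun s hs => if_neg (not_le.2 hs))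

lemma pathTV_neg (f : ℝ → ℝ) : pathTV T (-f) = pathTV T f := by
  simp only [pathTV, eVariationOn, Pi.neg_apply, abs_neg, edist_neg_neg]

lemma pathTV_eq_of_monotoneOn {f : ℝ → ℝ} (hT : 0 ≤ T) (hf : MonotoneOn f (Icc 0 T))
    (hf0 : 0 ≤ f 0) : pathTV T f = f T := by
  have h0 : (0 : ℝ) ∈ Icc 0 T := left_mem_Icc.2 hT
  have hT' : T ∈ Icc 0 T := right_mem_Icc.2 hT
  have hvar := hf.eVariationOn_eq h0 hT'
  rw [inter_self] at hvar
  rw [pathTV, hvar, ENNReal.toReal_ofReal (sub_nonneg.2 (hf h0 hT' hT)), abs_of_nonneg hf0]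
  ring

lemma pathTV_step (ha : a ∈ Icc 0 T) : pathTV T (fun t => if a ≤ t then c else 0) = |c| := by
  have hT : 0 ≤ T := ha.1.trans ha.2
  have key : ∀ c, 0 ≤ c → pathTV T (fun t => if a ≤ t then c else 0) = c := fun c hc => by
    rw [pathTV_eq_of_monotoneOn hT ((monotone_step hc).monotoneOn _)
      (by split_ifs <;> simp [hc]), if_pos ha.2]
  rcases le_or_gt 0 c with hc | hc
  · rw [key c hc, abs_of_nonneg hc]
  · have hneg : (fun t => if a ≤ t then c else 0) = -fun t => if a ≤ t then -c else 0 := by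
      ext t
      simp only [Pi.neg_apply]
      split_ifs <;> simp
    rw [hneg, pathTV_neg, key (-c) (neg_nonneg.2 hc.le), abs_of_neg hc]

end StepPath

def deltaPlanₗ (τ : Ω → ℝ) : (Ω → ℝ) →ₗ[ℝ] Ω → ℝ → ℝ where
  toFun := deltaPlan τ
  map_add' Z W := by
    ext ω t
    simp only [deltaPlan, Pi.add_apply]
    split_ifs <;> simp
  map_smul' c Z := by
    ext ω t
    simp only [deltaPlan, Pi.smul_apply, smul_eq_mul, RingHom.id_apply]
    split_ifs <;> simp

variable {P : Measure Ω} {ℱ : Filtration ℝ m} {T : ℝ} {τ Z : Ω → ℝ}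

lemma strongNorm_deltaPlan (hτ : ∀ ω, τ ω ∈ Icc 0 T) (Z : Ω → ℝ) :
    strongNorm P T (deltaPlan τ Z) = ∫ ω, |Z ω| ∂P :=
  integral_congr_ae (Eventually.of_forall fun ω => pathTV_step (hτ ω))

lemma measurable_deltaPlan_apply (hτ : IsStoppingTime ℱ fun ω => (τ ω : WithTop ℝ))
    (hZ : Measurable[hτ.measurableSpace] Z) (t : ℝ) :
    Measurable[ℱ t] fun ω => deltaPlan τ Z ω t := by
  intro B hB
  have hle : MeasurableSet[ℱ t] {ω | τ ω ≤ t} := by simpa using hτ.measurableSet_le t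
  have hZB : MeasurableSet[ℱ t] (Z ⁻¹' B ∩ {ω | τ ω ≤ t}) := by
    simpa using ((hτ.measurableSet _).1 (hZ hB)).2 t
  have hpre : (fun ω => deltaPlan τ Z ω t) ⁻¹' B =
      Z ⁻¹' B ∩ {ω | τ ω ≤ t} ∪ (fun _ => (0 : ℝ)) ⁻¹' B \ {ω | τ ω ≤ t} := by
    ext ω
    by_cases h : τ ω ≤ t <;> simp [deltaPlan, h]
  rw [hpre]
  exact hZB.union ((measurable_const hB).diff hle)

lemma isPlan_deltaPlan (hτ : IsBddStoppingTime ℱ T τ) (hZ : Measurable[hτ.1.measurableSpace] Z)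
    (hZ0 : ∀ ω, 0 ≤ Z ω) (hZi : Integrable Z P) : IsPlan P ℱ T 1 (deltaPlan τ Z) where
  mono ω := monotone_step (hZ0 ω)
  right_cont _ := continuousWithinAt_Ici_step
  zero_neg ω _ ht := if_neg (ht.trans_le (hτ.2 ω).1).not_ge
  const_ge ω _ ht := by simp only [deltaPlan, if_pos ((hτ.2 ω).2.trans ht), if_pos (hτ.2 ω).2]
  adapted := measurable_deltaPlan_apply hτ.1 hZ
  memLp := memLp_one_iff_integrable.2 <| hZi.congr <| Eventually.of_forall fun ω =>
    (if_pos (hτ.2 ω).2).symm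

lemma memE_deltaPlan (hτ : IsBddStoppingTime ℱ T τ) (hZ : Measurable[hτ.1.measurableSpace] Z)
    (hZi : Integrable Z P) : MemE P ℱ T 1 (deltaPlan τ Z) := by
  refine ⟨deltaPlan τ fun ω => max (Z ω) 0, deltaPlan τ fun ω => max (-Z ω) 0,
    isPlan_deltaPlan hτ (hZ.max measurable_const) (fun _ => le_max_right _ _) hZi.pos_part,
    isPlan_deltaPlan hτ (hZ.neg.max measurable_const) (fun _ => le_max_right _ _)
      hZi.neg.pos_part, ?_⟩
  ext ω t
  simp only [deltaPlan, Pi.sub_apply]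
  split_ifs
  exacts [(max_zero_sub_max_neg_zero_eq_self (Z ω)).symm, (sub_zero 0).symm]

theorem exists_representing_density_at_stopping_time_general
    {Ω : Type*} [m : MeasurableSpace Ω] (P : Measure Ω) [IsProbabilityMeasure P]
    (ℱ : Filtration ℝ m) (T : ℝ)
    (π : (Ω → ℝ → ℝ) →ₗ[ℝ] ℝ)
    (hπ : ∀ x, IsPlan P ℱ T 1 x → 0 ≤ π x)
    (K : ℝ) (hK : 0 ≤ K)
    (hbd : ∀ z, MemE P ℱ T 1 z → |π z| ≤ K * strongNorm P T z)
    (τ : Ω → ℝ) (hτ : IsBddStoppingTime ℱ T τ) :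
    ∃ zτ : Ω → ℝ, Measurable[hτ.1.measurableSpace] zτ ∧
      (∀ᵐ ω ∂P, 0 ≤ zτ ω ∧ zτ ω ≤ K) ∧
      ∀ Z : Ω → ℝ, Measurable[hτ.1.measurableSpace] Z → Integrable Z P →
        π (deltaPlan τ Z) = ∫ ω, Z ω * zτ ω ∂P := by
  have hle := hτ.1.measurableSpace_le
  refine exists_density_of_abs_le_integral_of_le hle (π ∘ₗ deltaPlanₗ τ) hK
    (fun Z hZ hZi => ?_) fun s hs => ?_
  · rw [← strongNorm_deltaPlan hτ.2]
    exact hbd _ (memE_deltaPlan hτ hZ hZi)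
  · exact hπ _ (isPlan_deltaPlan hτ (measurable_const.indicator hs)
      (indicator_nonneg fun _ _ => zero_le_one) ((integrable_const 1).indicator (hle _ hs)))

/-- for `p = 1` and a nonnegative linear functional with `|π z| ≤ K‖z‖_s`,
for every stopping time `τ ≤ T` there is an `𝓕_τ`-measurable `z^τ` with
`0 ≤ z^τ ≤ K` a.s. representing `Z ↦ π(δ_τ Z)` on `L¹(𝓕_τ)`. -/
theorem exists_representing_density_at_stopping_time
    {Ω : Type*} [m : MeasurableSpace Ω] (P : Measure Ω) [IsProbabilityMeasure P]
    (ℱ : Filtration ℝ m) (T : ℝ) (hT : 0 < T)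
    (π : (Ω → ℝ → ℝ) →ₗ[ℝ] ℝ)
    (hπ : ∀ x, IsPlan P ℱ T 1 x → 0 ≤ π x)
    (K : ℝ) (hK : 0 ≤ K)
    (hbd : ∀ z, MemE P ℱ T 1 z → |π z| ≤ K * strongNorm P T z)
    (τ : Ω → ℝ) (hτ : IsBddStoppingTime ℱ T τ) :
    ∃ zτ : Ω → ℝ, Measurable[hτ.1.measurableSpace] zτ ∧
      (∀ᵐ ω ∂P, 0 ≤ zτ ω ∧ zτ ω ≤ K) ∧
      ∀ Z : Ω → ℝ, Measurable[hτ.1.measurableSpace] Z → Integrable Z P →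
        π (deltaPlan τ Z) = ∫ ω, Z ω * zτ ω ∂P :=
  exists_representing_density_at_stopping_time_general (m := m) P ℱ T π hπ K hK hbd τ hτ

end Equil
end
end

section
/- Let π be a nonnegative linear functional on E, and for each stopping time τ ≤ T let z^τ be an 𝓕_τ-measurable, nonnegative, integrable random variable satisfying π(δ_τ Z) = E[Z · z^τ] for every bounded 𝓕_τ-measurable random variable Z. Then the family (z^τ)_{τ stopping time ≤ T} is a 𝒯-system: for any two stopping times σ, τ ≤ T, z^σ = z^τ almost surely on the event {σ = τ}. -/
open MeasureTheory Set Filter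
open scoped ENNReal Topology Classical

noncomputable section

namespace MeasureTheory.IsStoppingTime

variable {Ω : Type*} [m : MeasurableSpace Ω] {ι : Type*} [LinearOrder ι] [TopologicalSpace ι]
  [OrderTopology ι] [SecondCountableTopology ι] {f : Filtration ι m} {τ σ : Ω → WithTop ι}

theorem measurableSet_inter_eq_stopping_time (hτ : IsStoppingTime f τ)
    (hσ : IsStoppingTime f σ) {s : Set Ω} (hs : MeasurableSet[hτ.measurableSpace] s) :
    MeasurableSet[hσ.measurableSpace] (s ∩ {ω | τ ω = σ ω}) := by
  have hle : MeasurableSet[hσ.measurableSpace] (s ∩ {ω | τ ω ≤ σ ω}) :=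
    ((measurableSet_min_iff hτ hσ _).1 (measurableSet_inter_le hτ hσ s hs)).2
  have hge : MeasurableSet[hσ.measurableSpace] {ω | σ ω ≤ τ ω} :=
    hσ.measurableSet_le_stopping_time hτ
  have hsplit : s ∩ {ω | τ ω = σ ω} = s ∩ {ω | τ ω ≤ σ ω} ∩ {ω | σ ω ≤ τ ω} := by
    ext ω
    simp [le_antisymm_iff, and_assoc]
  exact hsplit ▸ hle.inter hge

theorem measurable_indicator_eq_stopping_time {β : Type*} [MeasurableSpace β] [Zero β]
    (hτ : IsStoppingTime f τ) (hσ : IsStoppingTime f σ) {g : Ω → β}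
    (hg : Measurable[hτ.measurableSpace] g) :
    Measurable[hσ.measurableSpace] ({ω | τ ω = σ ω}.indicator g) := by
  intro B hB
  have hA : MeasurableSet[hσ.measurableSpace] {ω | τ ω = σ ω} := by
    simpa using hτ.measurableSet_inter_eq_stopping_time hσ MeasurableSet.univ
  rw [Set.indicator_preimage, Set.ite]
  exact (hτ.measurableSet_inter_eq_stopping_time hσ (hg hB)).union
    ((measurable_const hB).diff hA)

end MeasureTheory.IsStoppingTime

namespace Equil

variable {Ω : Type*}

theorem deltaPlan_congr {σ τ Z : Ω → ℝ} (h : EqOn σ τ (Function.support Z)) :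
    deltaPlan σ Z = deltaPlan τ Z := by
  funext ω t
  by_cases hZ : Z ω = 0
  · simp [deltaPlan, hZ]
  · simp [deltaPlan, h hZ]

variable [m : MeasurableSpace Ω]

def IsDensityAt (P : Measure Ω) {ℱ : Filtration ℝ m} (π : (Ω → ℝ → ℝ) →ₗ[ℝ] ℝ)
    {σ : Ω → ℝ} (hσ : IsStoppingTime ℱ (fun ω => (σ ω : WithTop ℝ))) (z : Ω → ℝ) : Prop :=
  ∀ Z : Ω → ℝ, Measurable[hσ.measurableSpace] Z → (∃ C, ∀ ω, |Z ω| ≤ C) →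
    π (deltaPlan σ Z) = ∫ ω, Z ω * z ω ∂P

section IsDensityAt

variable {P : Measure Ω} {ℱ : Filtration ℝ m} {π : (Ω → ℝ → ℝ) →ₗ[ℝ] ℝ} {σ τ : Ω → ℝ}
  {hσ : IsStoppingTime ℱ (fun ω => (σ ω : WithTop ℝ))}
  {hτ : IsStoppingTime ℱ (fun ω => (τ ω : WithTop ℝ))} {zσ zτ : Ω → ℝ}

theorem IsDensityAt.setIntegral_eq (hz : IsDensityAt P π hσ zσ) {s : Set Ω}
    (hs : MeasurableSet[hσ.measurableSpace] s) :
    ∫ ω in s, zσ ω ∂P = π (deltaPlan σ (s.indicator 1)) := by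
  have hbdd : ∃ C, ∀ ω, |s.indicator (1 : Ω → ℝ) ω| ≤ C :=
    ⟨1, fun ω => by by_cases hω : ω ∈ s <;> simp [hω]⟩
  rw [hz (s.indicator 1) (measurable_const.indicator hs) hbdd,
    ← integral_indicator (hσ.measurableSpace_le _ hs)]
  simp only [← Set.indicator_mul_left, Pi.one_apply, one_mul]

theorem IsDensityAt.indicator_ae_eq [IsFiniteMeasure P] (hzσ : IsDensityAt P π hσ zσ)
    (hzτ : IsDensityAt P π hτ zτ) (hzσm : Measurable[hσ.measurableSpace] zσ)
    (hzτm : Measurable[hτ.measurableSpace] zτ) (hzσi : Integrable zσ P)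
    (hzτi : Integrable zτ P) :
    {ω | σ ω = τ ω}.indicator zσ =ᵐ[P] {ω | σ ω = τ ω}.indicator zτ := by
  have hA : {ω | σ ω = τ ω} = {ω | (σ ω : WithTop ℝ) = τ ω} := by simp
  have hAσ : MeasurableSet[hσ.measurableSpace] {ω | σ ω = τ ω} :=
    hA ▸ hσ.measurableSet_eq_stopping_time hτ
  have hAm : MeasurableSet {ω | σ ω = τ ω} := hσ.measurableSpace_le _ hAσ
  have hzσm' : Measurable[hσ.measurableSpace] ({ω | σ ω = τ ω}.indicator zσ) :=
    hzσm.indicator hAσ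
  have hzτm' : Measurable[hσ.measurableSpace] ({ω | σ ω = τ ω}.indicator zτ) := by
    simpa [eq_comm] using hτ.measurable_indicator_eq_stopping_time hσ hzτm
  refine ae_eq_of_forall_setIntegral_eq_of_sigmaFinite' hσ.measurableSpace_le
    (fun s _ _ => (hzσi.indicator hAm).integrableOn)
    (fun s _ _ => (hzτi.indicator hAm).integrableOn) (fun s hs _ => ?_)
    hzσm'.aestronglyMeasurable hzτm'.aestronglyMeasurable
  have hsσ : MeasurableSet[hσ.measurableSpace] (s ∩ {ω | σ ω = τ ω}) := hs.inter hAσ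
  have hsτ : MeasurableSet[hτ.measurableSpace] (s ∩ {ω | σ ω = τ ω}) := by
    simpa [← hA] using hσ.measurableSet_inter_eq_stopping_time hτ hs
  have hdelta : deltaPlan σ ((s ∩ {ω | σ ω = τ ω}).indicator 1)
      = deltaPlan τ ((s ∩ {ω | σ ω = τ ω}).indicator 1) :=
    deltaPlan_congr fun ω hω => (Set.indicator_apply_ne_zero.1 hω).1.2
  rw [setIntegral_indicator hAm, setIntegral_indicator hAm, hzσ.setIntegral_eq hsσ,
    hzτ.setIntegral_eq hsτ, hdelta]

end IsDensityAt

theorem density_family_is_T_system_general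
    {Ω : Type*} [m : MeasurableSpace Ω] (P : Measure Ω) [IsProbabilityMeasure P]
    (ℱ : Filtration ℝ m) (T : ℝ)
    (π : (Ω → ℝ → ℝ) →ₗ[ℝ] ℝ)
    (σ τ : Ω → ℝ) (hσ : IsBddStoppingTime ℱ T σ) (hτ : IsBddStoppingTime ℱ T τ)
    (zσ zτ : Ω → ℝ)
    (hzσm : Measurable[hσ.1.measurableSpace] zσ)
    (hzσi : Integrable zσ P)
    (hzτm : Measurable[hτ.1.measurableSpace] zτ)
    (hzτi : Integrable zτ P)
    (hσrep : ∀ Z : Ω → ℝ, Measurable[hσ.1.measurableSpace] Z → (∃ C, ∀ ω, |Z ω| ≤ C) →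
      π (deltaPlan σ Z) = ∫ ω, Z ω * zσ ω ∂P)
    (hτrep : ∀ Z : Ω → ℝ, Measurable[hτ.1.measurableSpace] Z → (∃ C, ∀ ω, |Z ω| ≤ C) →
      π (deltaPlan τ Z) = ∫ ω, Z ω * zτ ω ∂P) :
    ∀ᵐ ω ∂P, σ ω = τ ω → zσ ω = zτ ω := by
  have key := IsDensityAt.indicator_ae_eq (hσ := hσ.1) (hτ := hτ.1) hσrep hτrep hzσm hzτm
    hzσi hzτi
  filter_upwards [key] with ω hω hστ
  simpa [Set.indicator_of_mem (show ω ∈ {ω | σ ω = τ ω} from hστ)] using hω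

/-- the densities representing a nonnegative linear functional at stopping
times form a `𝒯`-system: `z^σ = z^τ` a.s. on `{σ = τ}`. -/
theorem density_family_is_T_system
    {Ω : Type*} [m : MeasurableSpace Ω] (P : Measure Ω) [IsProbabilityMeasure P]
    (ℱ : Filtration ℝ m) (T : ℝ) (hT : 0 < T)
    (p : ℝ≥0∞) (hp : 1 ≤ p) (hp' : p ≠ ∞)
    (π : (Ω → ℝ → ℝ) →ₗ[ℝ] ℝ)
    (hπ : ∀ x, IsPlan P ℱ T p x → 0 ≤ π x)
    (σ τ : Ω → ℝ) (hσ : IsBddStoppingTime ℱ T σ) (hτ : IsBddStoppingTime ℱ T τ)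
    (zσ zτ : Ω → ℝ)
    (hzσm : Measurable[hσ.1.measurableSpace] zσ) (hzσ0 : ∀ᵐ ω ∂P, 0 ≤ zσ ω)
    (hzσi : Integrable zσ P)
    (hzτm : Measurable[hτ.1.measurableSpace] zτ) (hzτ0 : ∀ᵐ ω ∂P, 0 ≤ zτ ω)
    (hzτi : Integrable zτ P)
    (hσrep : ∀ Z : Ω → ℝ, Measurable[hσ.1.measurableSpace] Z → (∃ C, ∀ ω, |Z ω| ≤ C) →
      π (deltaPlan σ Z) = ∫ ω, Z ω * zσ ω ∂P)
    (hτrep : ∀ Z : Ω → ℝ, Measurable[hτ.1.measurableSpace] Z → (∃ C, ∀ ω, |Z ω| ≤ C) →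
      π (deltaPlan τ Z) = ∫ ω, Z ω * zτ ω ∂P) :
    ∀ᵐ ω ∂P, σ ω = τ ω → zσ ω = zτ ω :=
  density_family_is_T_system_general (m := m) P ℱ T π σ τ hσ hτ zσ zτ hzσm hzσi hzτm hzτi hσrep
    hτrep

end Equil
end
end

section
/- For any two stopping times σ, τ with values in [0,T], the intertemporal distance between the corresponding Dirac consumption plans satisfies ‖δ_τ − δ_σ‖ = ( E|τ − σ| )^{1/p}. Consequently, if (τ_n) is a sequence of stopping times with τ_n → τ almost surely, then δ_{τ_n} → δ_τ in the intertemporal norm. -/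
open MeasureTheory Set Filter
open scoped ENNReal Topology Classical

noncomputable section

namespace Equil

variable {Ω : Type*} [m : MeasurableSpace Ω]

/-! Pathwise, `|1_{τ ≤ t} - 1_{σ ≤ t}|^p` is the indicator of `[τ ∧ σ, τ ∨ σ)`, an interval
of length `|τ - σ|` inside `[0, T)`, so the Dirac mass at `T` contributes nothing and the
Lebesgue part is `|τ - σ|`. The convergence then follows by dominated convergence, as
`|τₙ - τ| ≤ T`. -/

lemma abs_ite_sub_ite_rpow {c : ℝ} (hc : c ≠ 0) (u v t : ℝ) :
    |(if u ≤ t then (1 : ℝ) else 0) - (if v ≤ t then 1 else 0)| ^ c =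
      (Ico (min u v) (max u v)).indicator 1 t := by
  by_cases hu : u ≤ t <;> by_cases hv : v ≤ t <;> simp [hu, hv, indicator, Real.zero_rpow hc]

lemma setIntegral_abs_ite_sub_ite_rpow {c : ℝ} (hc : c ≠ 0) {T u v : ℝ}
    (hu : u ∈ Icc 0 T) (hv : v ∈ Icc 0 T) :
    ∫ t in Icc 0 T, |(if u ≤ t then (1 : ℝ) else 0) - (if v ≤ t then 1 else 0)| ^ c =
      |u - v| := by
  have hsub : Ico (min u v) (max u v) ⊆ Icc 0 T :=
    Ico_subset_Icc_self.trans (Icc_subset_Icc (le_min hu.1 hv.1) (max_le hu.2 hv.2))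
  simp_rw [abs_ite_sub_ite_rpow hc]
  rw [setIntegral_indicator measurableSet_Ico, inter_eq_self_of_subset_right hsub]
  simp [Real.volume_real_Ico_of_le min_le_max, max_sub_min_eq_abs, abs_sub_comm]

theorem inorm_deltaPlan_sub_deltaPlan (P : Measure Ω) {T : ℝ} {p : ℝ≥0∞} (hp : p.toReal ≠ 0)
    {σ τ : Ω → ℝ} (hσ : ∀ ω, σ ω ∈ Icc 0 T) (hτ : ∀ ω, τ ω ∈ Icc 0 T) :
    inorm P T p (deltaPlan τ (fun _ => 1) - deltaPlan σ (fun _ => 1)) =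
      (∫ ω, |τ ω - σ ω| ∂P) ^ (1 / p.toReal) := by
  refine congrArg (· ^ (1 / p.toReal)) (integral_congr_ae (ae_of_all _ fun ω => ?_))
  simp only [deltaPlan, Pi.sub_apply]
  rw [setIntegral_abs_ite_sub_ite_rpow hp (hτ ω) (hσ ω), abs_ite_sub_ite_rpow hp,
    indicator_of_notMem fun h => h.2.not_ge (max_le (hτ ω).2 (hσ ω).2), add_zero]

lemma IsBddStoppingTime.measurable {ℱ : Filtration ℝ m} {T : ℝ} {τ : Ω → ℝ}
    (hτ : IsBddStoppingTime ℱ T τ) : Measurable τ := by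
  simpa using ((hτ.1.measurable_of_le (i := T) fun ω => WithTop.coe_le_coe.2 (hτ.2 ω).2).mono
    (ℱ.le T) le_rfl).untopD 0

lemma tendsto_integral_abs_sub_of_tendsto_ae (P : Measure Ω) [IsFiniteMeasure P] {T : ℝ}
    {τn : ℕ → Ω → ℝ} {τ : Ω → ℝ} (hτn_meas : ∀ n, Measurable (τn n)) (hτ_meas : Measurable τ)
    (hτn : ∀ n ω, τn n ω ∈ Icc 0 T) (hτ : ∀ ω, τ ω ∈ Icc 0 T)
    (hlim : ∀ᵐ ω ∂P, Tendsto (fun n => τn n ω) atTop (𝓝 (τ ω))) :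
    Tendsto (fun n => ∫ ω, |τn n ω - τ ω| ∂P) atTop (𝓝 0) := by
  have hbound : ∀ n ω, ‖|τn n ω - τ ω|‖ ≤ T := fun n ω => by
    rw [norm_abs_eq_norm, Real.norm_eq_abs, abs_sub_le_iff]
    constructor <;> linarith [(hτn n ω).1, (hτn n ω).2, (hτ ω).1, (hτ ω).2]
  simpa using tendsto_integral_of_dominated_convergence (f := fun _ => 0) (fun _ => T)
    (fun n => ((hτn_meas n).sub hτ_meas).abs.aestronglyMeasurable) (integrable_const T)
    (fun n => ae_of_all _ (hbound n))
    (hlim.mono fun ω hω => by simpa using (hω.sub_const (τ ω)).abs)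

theorem inorm_delta_sub_delta_general
    {Ω : Type*} [m : MeasurableSpace Ω] (P : Measure Ω) [IsProbabilityMeasure P]
    (ℱ : Filtration ℝ m) (T : ℝ)
    (p : ℝ≥0∞) (hp : 1 ≤ p) (hp' : p ≠ ∞) :
    (∀ σ τ : Ω → ℝ, IsBddStoppingTime ℱ T σ → IsBddStoppingTime ℱ T τ →
      inorm P T p (deltaPlan τ (fun _ => 1) - deltaPlan σ (fun _ => 1)) =
        (∫ ω, |τ ω - σ ω| ∂P) ^ (1 / p.toReal)) ∧
    ∀ (τn : ℕ → Ω → ℝ) (τ : Ω → ℝ),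
      (∀ n, IsBddStoppingTime ℱ T (τn n)) → IsBddStoppingTime ℱ T τ →
      (∀ᵐ ω ∂P, Tendsto (fun n => τn n ω) atTop (nhds (τ ω))) →
      Tendsto
        (fun n =>
          inorm P T p (deltaPlan (τn n) (fun _ => 1) - deltaPlan τ (fun _ => 1)))
        atTop (nhds 0) := by
  have hp_pos : 0 < p.toReal := ENNReal.toReal_pos (zero_lt_one.trans_le hp).ne' hp'
  refine ⟨fun σ τ hσ hτ => inorm_deltaPlan_sub_deltaPlan P hp_pos.ne' hσ.2 hτ.2, ?_⟩
  intro τn τ hτn hτ hlim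
  simp_rw [inorm_deltaPlan_sub_deltaPlan P hp_pos.ne' hτ.2 (hτn _).2]
  have hint := tendsto_integral_abs_sub_of_tendsto_ae P (fun n => (hτn n).measurable)
    hτ.measurable (fun n => (hτn n).2) hτ.2 hlim
  have hrpow : ContinuousAt (fun x : ℝ => x ^ (1 / p.toReal)) 0 :=
    Real.continuousAt_rpow_const 0 _ (Or.inr (by positivity))
  rw [← Real.zero_rpow (one_div_pos.2 hp_pos).ne']
  exact hrpow.tendsto.comp hint

/-- `‖δ_τ − δ_σ‖ = (E|τ − σ|)^{1/p}`; consequently `τ_n → τ` a.s. implies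
`δ_{τ_n} → δ_τ` in the intertemporal norm. -/
theorem inorm_delta_sub_delta
    {Ω : Type*} [m : MeasurableSpace Ω] (P : Measure Ω) [IsProbabilityMeasure P]
    (ℱ : Filtration ℝ m) (T : ℝ) (hT : 0 < T)
    (p : ℝ≥0∞) (hp : 1 ≤ p) (hp' : p ≠ ∞) :
    (∀ σ τ : Ω → ℝ, IsBddStoppingTime ℱ T σ → IsBddStoppingTime ℱ T τ →
      inorm P T p (deltaPlan τ (fun _ => 1) - deltaPlan σ (fun _ => 1)) =
        (∫ ω, |τ ω - σ ω| ∂P) ^ (1 / p.toReal)) ∧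
    ∀ (τn : ℕ → Ω → ℝ) (τ : Ω → ℝ),
      (∀ n, IsBddStoppingTime ℱ T (τn n)) → IsBddStoppingTime ℱ T τ →
      (∀ᵐ ω ∂P, Tendsto (fun n => τn n ω) atTop (nhds (τ ω))) →
      Tendsto
        (fun n =>
          inorm P T p (deltaPlan (τn n) (fun _ => 1) - deltaPlan τ (fun _ => 1)))
        atTop (nhds 0) :=
  inorm_delta_sub_delta_general (m := m) P ℱ T p hp hp'

end Equil
end
end

section
/- Let x ∈ E_+ and for k > 0 define the truncated plan x_k by x_k(t) = min(x_t, k) for t ∈ [0,T]. Then x_k ∈ E_+ and x − x_k ∈ E_+; the pathwise total variation of x − x_k equals (x_T − k)⁺, so that E‖x − x_k‖_TV = E[(x_T − k)⁺] → 0 as k → ∞; and for almost every ω, for every nonnegative Borel-measurable function f on [0,T], ∫_{[0,T]} f d x_k(ω) → ∫_{[0,T]} f dx(ω) as k → ∞. -/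
open MeasureTheory Set Filter
open scoped ENNReal Topology Classical

noncomputable section

namespace Equil

variable {Ω : Type*} [m : MeasurableSpace Ω]

/-!
Both `min(x, k)` and `x - min(x, k) = (x - k)⁺` are nondecreasing in `x`, so they are again
plans, and the total variation of a plan's path is simply its terminal value; for the remainder
this is `(x_T - k)⁺`, whose expectation tends to `0` by dominated convergence with the
integrable bound `x_T`. Finally each path of `x` is bounded by `x_T(ω)`, so `min(x(ω), k)`
coincides with `x(ω)`, and so do their Stieltjes measures, as soon as `k ≥ x_T(ω)`.
-/

theorem _root_.Monotone.eVariationOn_Icc {f : ℝ → ℝ} (hf : Monotone f) (a b : ℝ) :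
    eVariationOn f (Icc a b) = ENNReal.ofReal (f b - f a) := by
  simpa using (hf.monotoneOn univ).eVariationOn_eq (mem_univ a) (mem_univ b)

theorem tendsto_integral_max_sub_zero_atTop {α : Type*} [MeasurableSpace α] {μ : Measure α}
    {g : α → ℝ} (hg : Integrable g μ) :
    Tendsto (fun k : ℝ => ∫ a, max (g a - k) 0 ∂μ) atTop (𝓝 0) := by
  have h_bound : ∀ᶠ k : ℝ in atTop, ∀ᵐ a ∂μ, ‖max (g a - k) 0‖ ≤ |g a| := by
    filter_upwards [eventually_ge_atTop 0] with k hk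
    refine .of_forall fun a => ?_
    rw [Real.norm_of_nonneg (le_max_right _ _)]
    exact max_le (by linarith [le_abs_self (g a)]) (abs_nonneg _)
  have h_lim : ∀ a, Tendsto (fun k : ℝ => max (g a - k) 0) atTop (𝓝 0) := fun a =>
    tendsto_const_nhds.congr' <| by
      filter_upwards [eventually_ge_atTop (g a)] with k hk
      exact (max_eq_right (by linarith)).symm
  simpa using tendsto_integral_filter_of_dominated_convergence (fun a => |g a|)
    (.of_forall fun k => (hg.aestronglyMeasurable.sub aestronglyMeasurable_const).sup
      aestronglyMeasurable_const)
    h_bound hg.abs (.of_forall h_lim)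

section LinearOrderedAddCommGroup

variable {α : Type*} [AddCommGroup α] [LinearOrder α] [IsOrderedAddMonoid α]

theorem sub_min_eq_max_sub_zero (a b : α) : a - min a b = max (a - b) 0 := by
  rcases le_total a b with h | h <;> simp [h]

theorem monotone_sub_min_const (k : α) : Monotone fun a : α => a - min a k := fun a b hab => by
  simp only [sub_min_eq_max_sub_zero]
  gcongr

end LinearOrderedAddCommGroup

namespace IsPlan

variable {P : Measure Ω} {ℱ : Filtration ℝ m} {T : ℝ} {p : ℝ≥0∞} {x : Ω → ℝ → ℝ}

theorem nonneg_s13 (hx : IsPlan P ℱ T p x) (ω : Ω) (t : ℝ) : 0 ≤ x ω t :=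
  calc 0 = x ω (min t 0 - 1) := (hx.zero_neg ω _ (by linarith [min_le_right t 0])).symm
    _ ≤ x ω t := hx.mono ω (by linarith [min_le_left t 0])

theorem le_terminal (hx : IsPlan P ℱ T p x) (ω : Ω) (t : ℝ) : x ω t ≤ x ω T := by
  rcases le_total t T with h | h
  · exact hx.mono ω h
  · exact (hx.const_ge ω t h).le

theorem measurable_terminal (hx : IsPlan P ℱ T p x) : Measurable fun ω => x ω T :=
  (hx.adapted T).mono (ℱ.le T) le_rfl

theorem pathTV_eq (hx : IsPlan P ℱ T p x) (ω : Ω) : pathTV T (x ω) = x ω T := by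
  rw [pathTV, (hx.mono ω).eVariationOn_Icc,
    ENNReal.toReal_ofReal (sub_nonneg.2 (hx.le_terminal ω 0)), abs_of_nonneg (hx.nonneg_s13 ω 0)]
  ring

theorem min_const (hx : IsPlan P ℱ T p x) {k : ℝ} (hk : 0 ≤ k) :
    IsPlan P ℱ T p fun ω t => min (x ω t) k where
  mono ω := (hx.mono ω).min monotone_const
  right_cont ω t := (hx.right_cont ω t).min continuousWithinAt_const
  zero_neg ω t ht := by rw [hx.zero_neg ω t ht, min_eq_left hk]
  const_ge ω t ht := by rw [hx.const_ge ω t ht]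
  adapted t := (hx.adapted t).min measurable_const
  memLp := hx.memLp.of_le (hx.measurable_terminal.min measurable_const).aestronglyMeasurable
    (.of_forall fun ω => by
      simp only [Real.norm_eq_abs, abs_of_nonneg (le_min (hx.nonneg_s13 ω T) hk),
        abs_of_nonneg (hx.nonneg_s13 ω T), min_le_left])

theorem sub_min_const (hx : IsPlan P ℱ T p x) {k : ℝ} (hk : 0 ≤ k) :
    IsPlan P ℱ T p fun ω t => x ω t - min (x ω t) k where
  mono ω := (monotone_sub_min_const k).comp (hx.mono ω)
  right_cont ω t := (hx.right_cont ω t).sub ((hx.right_cont ω t).min continuousWithinAt_const)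
  zero_neg ω t ht := by rw [hx.zero_neg ω t ht, min_eq_left hk, sub_zero]
  const_ge ω t ht := by rw [hx.const_ge ω t ht]
  adapted t := (hx.adapted t).sub ((hx.adapted t).min measurable_const)
  memLp := hx.memLp.of_le
    (hx.measurable_terminal.sub (hx.measurable_terminal.min measurable_const)).aestronglyMeasurable
    (.of_forall fun ω => by
      have h0 := hx.nonneg_s13 ω T
      simp only [Real.norm_eq_abs, abs_of_nonneg h0,
        abs_of_nonneg (sub_nonneg.2 (min_le_left (x ω T) k))]
      linarith [le_min h0 hk])

end IsPlan

theorem eventually_min_const_eq {f : ℝ → ℝ} {M : ℝ} (hf : ∀ t, f t ≤ M) :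
    ∀ᶠ k in atTop, (fun t => min (f t) k) = f := by
  filter_upwards [eventually_ge_atTop M] with k hk
  exact funext fun t => min_eq_left ((hf t).trans hk)

theorem truncation_properties_general
    {Ω : Type*} [m : MeasurableSpace Ω] (P : Measure Ω) [IsProbabilityMeasure P]
    (ℱ : Filtration ℝ m) (T : ℝ)
    (p : ℝ≥0∞) (hp : 1 ≤ p)
    (x : Ω → ℝ → ℝ) (hx : IsPlan P ℱ T p x) :
    (∀ k : ℝ, 0 < k → IsPlan P ℱ T p (fun ω t => min (x ω t) k)) ∧
    (∀ k : ℝ, 0 < k → IsPlan P ℱ T p (fun ω t => x ω t - min (x ω t) k)) ∧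
    (∀ k : ℝ, 0 < k → ∀ ω,
      pathTV T (fun t => x ω t - min (x ω t) k) = max (x ω T - k) 0) ∧
    (∀ k : ℝ, 0 < k →
      strongNorm P T (fun ω t => x ω t - min (x ω t) k) =
        ∫ ω, max (x ω T - k) 0 ∂P) ∧
    Tendsto (fun k : ℝ => strongNorm P T (fun ω t => x ω t - min (x ω t) k))
      atTop (nhds 0) ∧
    ∀ᵐ ω ∂P, ∀ f : ℝ → ℝ≥0∞, Measurable f →
      Tendsto
        (fun k : ℝ =>
          ∫⁻ t in Set.Icc (0 : ℝ) T, f t ∂(pathMeasure fun t => min (x ω t) k))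
        atTop (nhds (∫⁻ t in Set.Icc (0 : ℝ) T, f t ∂(pathMeasure (x ω)))) := by
  have remainder_pathTV : ∀ k : ℝ, 0 < k → ∀ ω,
      pathTV T (fun t => x ω t - min (x ω t) k) = max (x ω T - k) 0 := fun k hk ω => by
    rw [(hx.sub_min_const hk.le).pathTV_eq, sub_min_eq_max_sub_zero]
  have remainder_strongNorm : ∀ k : ℝ, 0 < k →
      strongNorm P T (fun ω t => x ω t - min (x ω t) k) = ∫ ω, max (x ω T - k) 0 ∂P :=
    fun k hk => integral_congr_ae (.of_forall (remainder_pathTV k hk))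
  refine ⟨fun k hk => hx.min_const hk.le, fun k hk => hx.sub_min_const hk.le,
    remainder_pathTV, remainder_strongNorm, ?_, .of_forall fun ω f _ => ?_⟩
  · refine (tendsto_integral_max_sub_zero_atTop (hx.memLp.integrable hp)).congr' ?_
    filter_upwards [eventually_gt_atTop 0] with k hk
    exact (remainder_strongNorm k hk).symm
  · refine tendsto_const_nhds.congr' ?_
    filter_upwards [eventually_min_const_eq (hx.le_terminal ω)] with k hk
    rw [hk]

/-- properties of the truncated plans `x_k = min(x, k)`. -/
theorem truncation_properties
    {Ω : Type*} [m : MeasurableSpace Ω] (P : Measure Ω) [IsProbabilityMeasure P]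
    (ℱ : Filtration ℝ m) (T : ℝ) (hT : 0 < T)
    (p : ℝ≥0∞) (hp : 1 ≤ p) (hp' : p ≠ ∞)
    (x : Ω → ℝ → ℝ) (hx : IsPlan P ℱ T p x) :
    (∀ k : ℝ, 0 < k → IsPlan P ℱ T p (fun ω t => min (x ω t) k)) ∧
    (∀ k : ℝ, 0 < k → IsPlan P ℱ T p (fun ω t => x ω t - min (x ω t) k)) ∧
    (∀ k : ℝ, 0 < k → ∀ ω,
      pathTV T (fun t => x ω t - min (x ω t) k) = max (x ω T - k) 0) ∧
    (∀ k : ℝ, 0 < k →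
      strongNorm P T (fun ω t => x ω t - min (x ω t) k) =
        ∫ ω, max (x ω T - k) 0 ∂P) ∧
    Tendsto (fun k : ℝ => strongNorm P T (fun ω t => x ω t - min (x ω t) k))
      atTop (nhds 0) ∧
    ∀ᵐ ω ∂P, ∀ f : ℝ → ℝ≥0∞, Measurable f →
      Tendsto
        (fun k : ℝ =>
          ∫⁻ t in Set.Icc (0 : ℝ) T, f t ∂(pathMeasure fun t => min (x ω t) k))
        atTop (nhds (∫⁻ t in Set.Icc (0 : ℝ) T, f t ∂(pathMeasure (x ω)))) :=
  truncation_properties_general (m := m) P ℱ T p hp x hx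

end Equil
end
end
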